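/- arXiv:1309.4065 — 6 statements merged into one kernel-verified Lean document; each statement's English description precedes it below -/
import Mathlib

section
/- Let X and Y be geodesic metric spaces and φ : X → Y a map such that: (1) there exists L > 0 with every point of Y within distance L of the image φ(X); (2) there exists K > 0 with dist(φ x₁, φ x₂) ≤ K·dist(x₁, x₂) for all x₁, x₂ ∈ X; and (3) for every M > 0 there exists N > 0 such that dist(x₁, x₂) > N implies dist(φ x₁, φ x₂) > M. Then φ is a quasi-isometry: there exist constants A ≥ 1 and B ≥ 0 such that (1/A)·dist(x₁, x₂) − B ≤ dist(φ x₁, φ x₂) ≤ A·dist(x₁, x₂) + B for all x₁, x₂ ∈ X, and (by (1)) the image φ(X) is L-quasidense in Y. -/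
/-- A metric space `Z` is geodesic: any two points are joined by a path parametrized by
arc length on the interval `[0, dist z₁ z₂]`. -/
def IsGeodesicMetricSpace (Z : Type*) [MetricSpace Z] : Prop :=
  ∀ z₁ z₂ : Z, ∃ γ : ℝ → Z, γ 0 = z₁ ∧ γ (dist z₁ z₂) = z₂ ∧
    ∀ s ∈ Set.Icc (0 : ℝ) (dist z₁ z₂), ∀ t ∈ Set.Icc (0 : ℝ) (dist z₁ z₂),
      dist (γ s) (γ t) = |s - t|

/-!
Only the lower bound needs an argument. Join `φ x₁` to `φ x₂` by a geodesic, cut it into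
`n ≈ dist (φ x₁) (φ x₂)` pieces of length at most `1`, and pick preimages of points `L`-close
to the cut points. Consecutive preimages have images at distance at most `2 L + 1`, hence by
metric properness they lie at distance at most a fixed `N`, so `dist x₁ x₂ ≤ N n`.
-/

open Finset

theorem IsGeodesicMetricSpace.exists_chain {Y : Type*} [MetricSpace Y]
    (hY : IsGeodesicMetricSpace Y) (y₁ y₂ : Y) {n : ℕ} (hn : 0 < n) :
    ∃ p : ℕ → Y, p 0 = y₁ ∧ p n = y₂ ∧
      ∀ i < n, dist (p i) (p (i + 1)) = dist y₁ y₂ / n := by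
  obtain ⟨γ, hγ₀, hγ₁, hγ⟩ := hY y₁ y₂
  have hn' : (0 : ℝ) < n := by exact_mod_cast hn
  have hmem : ∀ i ≤ n, (i : ℝ) * dist y₁ y₂ / n ∈ Set.Icc 0 (dist y₁ y₂) := fun i hi =>
    ⟨by positivity, by rw [div_le_iff₀ hn', mul_comm _ (n : ℝ)]; gcongr⟩
  refine ⟨fun i => γ (i * dist y₁ y₂ / n), by simpa using hγ₀, ?_, fun i hi => ?_⟩
  · simpa [mul_div_cancel_left₀ _ hn'.ne'] using hγ₁
  · rw [hγ _ (hmem i hi.le) _ (hmem (i + 1) hi), Nat.cast_succ,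
      show (i : ℝ) * dist y₁ y₂ / n - (i + 1) * dist y₁ y₂ / n = -(dist y₁ y₂ / n) by ring,
      abs_neg, abs_of_nonneg (by positivity)]

theorem exists_lift_chain {X Y : Type*} [MetricSpace X] [MetricSpace Y] (φ : X → Y)
    {L s : ℝ} (hL : 0 ≤ L) (h1 : ∀ y : Y, ∃ x : X, dist y (φ x) ≤ L)
    (x₁ x₂ : X) (p : ℕ → Y) {n : ℕ} (hn : 0 < n) (hp₀ : p 0 = φ x₁) (hpₙ : p n = φ x₂)
    (hp : ∀ i < n, dist (p i) (p (i + 1)) ≤ s) :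
    ∃ z : ℕ → X, z 0 = x₁ ∧ z n = x₂ ∧
      ∀ i < n, dist (φ (z i)) (φ (z (i + 1))) ≤ 2 * L + s := by
  choose ψ hψ using h1
  set z : ℕ → X := fun i => if i = 0 then x₁ else if i = n then x₂ else ψ (p i)
  have hz : ∀ i, dist (p i) (φ (z i)) ≤ L := by
    intro i
    by_cases h0 : i = 0
    · simp [z, h0, hp₀, hL]
    by_cases hn' : i = n
    · simp [z, hn', hn.ne', hpₙ, hL]
    · simpa [z, h0, hn'] using hψ (p i)
  refine ⟨z, by simp [z], by simp [z, hn.ne'], fun i hi => ?_⟩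
  calc dist (φ (z i)) (φ (z (i + 1)))
      ≤ dist (φ (z i)) (p i) + dist (p i) (p (i + 1)) + dist (p (i + 1)) (φ (z (i + 1))) :=
        dist_triangle4 _ _ _ _
    _ ≤ L + s + L := by
        rw [dist_comm]
        gcongr
        exacts [hz i, hp i hi, hz (i + 1)]
    _ = 2 * L + s := by ring

theorem dist_le_mul_dist_map_add_one {X Y : Type*} [MetricSpace X] [MetricSpace Y]
    (hY : IsGeodesicMetricSpace Y) (φ : X → Y) {L N : ℝ} (hL : 0 ≤ L)
    (h1 : ∀ y : Y, ∃ x : X, dist y (φ x) ≤ L) (hN₀ : 0 ≤ N)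
    (hN : ∀ a b : X, dist (φ a) (φ b) ≤ 2 * L + 1 → dist a b ≤ N) (x₁ x₂ : X) :
    dist x₁ x₂ ≤ N * (dist (φ x₁) (φ x₂) + 1) := by
  set D := dist (φ x₁) (φ x₂)
  set n := ⌊D⌋₊ + 1
  have hn : 0 < n := Nat.succ_pos _
  have hn' : (0 : ℝ) < n := by exact_mod_cast hn
  have hDn : D ≤ n := by simpa [n] using (Nat.lt_floor_add_one D).le
  have hnD : (n : ℝ) ≤ D + 1 := by
    simpa [n] using Nat.floor_le (dist_nonneg : 0 ≤ D)
  obtain ⟨p, hp₀, hpₙ, hp⟩ := hY.exists_chain (φ x₁) (φ x₂) hn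
  obtain ⟨z, hz₀, hzₙ, hz⟩ := exists_lift_chain φ hL h1 x₁ x₂ p hn hp₀ hpₙ
    (s := 1) fun i hi => (hp i hi).trans_le ((div_le_one hn').2 hDn)
  calc dist x₁ x₂ = dist (z 0) (z n) := by rw [hz₀, hzₙ]
    _ ≤ ∑ _i ∈ range n, N := dist_le_range_sum_of_dist_le n fun hi => hN _ _ (hz _ hi)
    _ = n * N := by rw [sum_const, card_range, nsmul_eq_mul]
    _ ≤ (D + 1) * N := by gcongr
    _ = N * (D + 1) := mul_comm _ _

theorem stmt1_general {X Y : Type*} [MetricSpace X] [MetricSpace Y]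
    (hY : IsGeodesicMetricSpace Y)
    (φ : X → Y) (L : ℝ) (hL : 0 < L)
    (h1 : ∀ y : Y, ∃ x : X, dist y (φ x) ≤ L)
    (K : ℝ)
    (h2 : ∀ x₁ x₂ : X, dist (φ x₁) (φ x₂) ≤ K * dist x₁ x₂)
    (h3 : ∀ M : ℝ, 0 < M → ∃ N : ℝ, 0 < N ∧
      ∀ x₁ x₂ : X, dist x₁ x₂ > N → dist (φ x₁) (φ x₂) > M) :
    (∃ A B : ℝ, 1 ≤ A ∧ 0 ≤ B ∧ ∀ x₁ x₂ : X,
      (1 / A) * dist x₁ x₂ - B ≤ dist (φ x₁) (φ x₂) ∧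
      dist (φ x₁) (φ x₂) ≤ A * dist x₁ x₂ + B) ∧
    (∀ y : Y, ∃ x : X, dist y (φ x) ≤ L) := by
  obtain ⟨N, hN₀, hN⟩ := h3 (2 * L + 1) (by linarith)
  have hN' : ∀ a b : X, dist (φ a) (φ b) ≤ 2 * L + 1 → dist a b ≤ N :=
    fun a b h => not_lt.1 fun h' => (hN a b h').not_ge h
  set A := max (max N K) 1
  have hA : 0 < A := lt_max_of_lt_right one_pos
  refine ⟨⟨A, 1, le_max_right _ _, zero_le_one, fun x₁ x₂ => ⟨?_, ?_⟩⟩, h1⟩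
  · have hlow := dist_le_mul_dist_map_add_one hY φ hL.le h1 hN₀.le hN' x₁ x₂
    have hNA : N * (dist (φ x₁) (φ x₂) + 1) ≤ A * (dist (φ x₁) (φ x₂) + 1) := by
      gcongr
      exact (le_max_left _ _).trans (le_max_left _ _)
    rw [one_div_mul_eq_div, sub_le_iff_le_add, div_le_iff₀ hA]
    linarith
  · calc dist (φ x₁) (φ x₂) ≤ K * dist x₁ x₂ := h2 x₁ x₂
      _ ≤ A * dist x₁ x₂ := by gcongr; exact (le_max_right _ _).trans (le_max_left _ _)
      _ ≤ A * dist x₁ x₂ + 1 := by linarith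

/-- A coarsely Lipschitz, coarsely surjective map between geodesic spaces that is metrically
proper (condition (3)) is a quasi-isometry, and its image is `L`-quasidense. -/
theorem stmt1 {X Y : Type*} [MetricSpace X] [MetricSpace Y]
    (hX : IsGeodesicMetricSpace X) (hY : IsGeodesicMetricSpace Y)
    (φ : X → Y) (L : ℝ) (hL : 0 < L)
    (h1 : ∀ y : Y, ∃ x : X, dist y (φ x) ≤ L)
    (K : ℝ) (hK : 0 < K)
    (h2 : ∀ x₁ x₂ : X, dist (φ x₁) (φ x₂) ≤ K * dist x₁ x₂)
    (h3 : ∀ M : ℝ, 0 < M → ∃ N : ℝ, 0 < N ∧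
      ∀ x₁ x₂ : X, dist x₁ x₂ > N → dist (φ x₁) (φ x₂) > M) :
    (∃ A B : ℝ, 1 ≤ A ∧ 0 ≤ B ∧ ∀ x₁ x₂ : X,
      (1 / A) * dist x₁ x₂ - B ≤ dist (φ x₁) (φ x₂) ∧
      dist (φ x₁) (φ x₂) ≤ A * dist x₁ x₂ + B) ∧
    (∀ y : Y, ∃ x : X, dist y (φ x) ≤ L) :=
  stmt1_general hY φ L hL h1 K h2 h3
end

section
/- Let u = (x₁, n₁) and v = (x₂, n₂) be adjacent vertices of the combinatorial horoball over ℤ (so either n₁ = n₂ and 0 < |x₁ − x₂| ≤ exp n₁, or x₁ = x₂ and |n₁ − n₂| = 1). Then the hyperbolic distance in ℍ between φ u = x₁ + (exp n₁)·i and φ v = x₂ + (exp n₂)·i is at most 1. -/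
/-- The combinatorial horoball over `ℤ`: vertices `ℤ × ℕ`; `(x, n)` and `(y, n)` are adjacent
whenever `0 < |x - y| ≤ exp n`, and `(x, n)` is adjacent to `(x, n + 1)`. -/
def ZHoroball : SimpleGraph (ℤ × ℕ) where
  Adj u v :=
    (u.2 = v.2 ∧ 0 < |u.1 - v.1| ∧ ((|u.1 - v.1| : ℤ) : ℝ) ≤ Real.exp u.2) ∨
    (u.1 = v.1 ∧ (u.2 = v.2 + 1 ∨ v.2 = u.2 + 1))
  symm := by
    constructor
    rintro ⟨x, m⟩ ⟨y, n⟩ (⟨h1, h2, h3⟩ | ⟨h1, h2⟩)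
    · left
      refine ⟨h1.symm, by rwa [abs_sub_comm], ?_⟩
      rw [abs_sub_comm]
      simp only at h1 ⊢
      rw [← h1]
      exact h3
    · exact Or.inr ⟨h1.symm, h2.symm⟩
  loopless := by
    constructor
    rintro ⟨x, n⟩ (⟨_, h2, _⟩ | ⟨_, h2 | h2⟩) <;> simp_all

/-- The point `k + (exp n)·i` of the hyperbolic upper half-plane `ℍ`. -/
noncomputable def horoPt (k : ℤ) (n : ℕ) : UpperHalfPlane :=
  ⟨⟨(k : ℝ), Real.exp n⟩, Real.exp_pos n⟩

/-! A horizontal edge has Euclidean length `|x₁ - x₂| ≤ exp n` at height `exp n`, and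
`dist z w ≤ |z - w| / √(im z · im w)` bounds its hyperbolic length by `1`. On a vertical line the
hyperbolic distance is the distance of the logarithms of the heights, so a vertical edge from
`exp n` to `exp (n + 1)` has length exactly `1`. -/

namespace UpperHalfPlane

theorem dist_le_one_of_im_eq {z w : ℍ} (him : z.im = w.im) (hre : |z.re - w.re| ≤ z.im) :
    dist z w ≤ 1 := by
  have hcoe : dist (z : ℂ) w = |z.re - w.re| := by
    rw [Complex.dist_of_im_eq (by simpa using him), Real.dist_eq, coe_re, coe_re]
  calc dist z w ≤ dist (z : ℂ) w / √(z.im * w.im) := dist_le_dist_coe_div_sqrt z w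
    _ = |z.re - w.re| / z.im := by rw [hcoe, ← him, Real.sqrt_mul_self z.im_pos.le]
    _ ≤ 1 := div_le_one_of_le₀ hre z.im_pos.le

end UpperHalfPlane

@[simp] theorem horoPt_re (k : ℤ) (n : ℕ) : (horoPt k n).re = k := rfl

@[simp] theorem horoPt_im (k : ℤ) (n : ℕ) : (horoPt k n).im = Real.exp n := rfl

theorem dist_horoPt_horoPt_eq_abs_sub (k : ℤ) (m n : ℕ) :
    dist (horoPt k m) (horoPt k n) = |(m : ℝ) - n| := by
  rw [UpperHalfPlane.dist_of_re_eq (by simp), horoPt_im, horoPt_im, Real.log_exp, Real.log_exp,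
    Real.dist_eq]

theorem dist_horoPt_horoPt_le_one_of_abs_sub_le {k l : ℤ} (n : ℕ)
    (h : ((|k - l| : ℤ) : ℝ) ≤ Real.exp n) :
    dist (horoPt k n) (horoPt l n) ≤ 1 :=
  UpperHalfPlane.dist_le_one_of_im_eq rfl (by simpa using h)

/-- Adjacent vertices of the combinatorial horoball over `ℤ` map to points of `ℍ` at
hyperbolic distance at most `1`. -/
theorem stmt4 (u v : ℤ × ℕ) (h : ZHoroball.Adj u v) :
    dist (horoPt u.1 u.2) (horoPt v.1 v.2) ≤ 1 := by
  obtain ⟨k, m⟩ := u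
  obtain ⟨l, n⟩ := v
  dsimp only [ZHoroball] at h
  rcases h with ⟨rfl, -, hkl⟩ | ⟨rfl, rfl | rfl⟩
  · exact dist_horoPt_horoPt_le_one_of_abs_sub_le _ hkl
  all_goals simp [dist_horoPt_horoPt_eq_abs_sub]
end

section
/- Let a, b ∈ ℤ with a ≠ b, let m, n ∈ ℕ, and set h = max(m, n, ⌈log |a − b|⌉) (natural logarithm, with ⌈·⌉ the ceiling as a natural number). Then the graph distance in the combinatorial horoball over ℤ satisfies d_G((a, m), (b, n)) ≤ (h − m) + (h − n) + 1. -/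
namespace ZHoroball

open SimpleGraph

lemma adj_succ (x : ℤ) (k : ℕ) : ZHoroball.Adj (x, k) (x, k + 1) :=
  Or.inr ⟨rfl, Or.inr rfl⟩

lemma exists_walk_vertical (x : ℤ) {k l : ℕ} (hkl : k ≤ l) :
    ∃ p : ZHoroball.Walk (x, k) (x, l), p.length = l - k := by
  induction l, hkl using Nat.le_induction with
  | base => exact ⟨Walk.nil, by simp⟩
  | succ l hkl ih =>
    obtain ⟨p, hp⟩ := ih
    exact ⟨p.concat (adj_succ x l), by rw [Walk.length_concat, hp]; omega⟩

lemma adj_of_log_le {a b : ℤ} (hab : a ≠ b) {k : ℕ}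
    (hk : Real.log |(a : ℝ) - (b : ℝ)| ≤ k) : ZHoroball.Adj (a, k) (b, k) := by
  have hpos : (0 : ℝ) < |(a : ℝ) - (b : ℝ)| := abs_pos.mpr (sub_ne_zero.mpr (mod_cast hab))
  refine Or.inl ⟨rfl, abs_pos.mpr (sub_ne_zero.mpr hab), ?_⟩
  calc ((|a - b| : ℤ) : ℝ) = Real.exp (Real.log |(a : ℝ) - (b : ℝ)|) := by
        push_cast; exact (Real.exp_log hpos).symm
    _ ≤ Real.exp k := Real.exp_le_exp.mpr hk

end ZHoroball

/-- The preferred path through the horoball (up from `(a, m)` to height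
`h = max (m, n, ⌈log |a − b|⌉)`, one horizontal edge, then down to `(b, n)`) gives the upper
bound `d_G((a, m), (b, n)) ≤ (h − m) + (h − n) + 1`. -/
theorem stmt6 (a b : ℤ) (hab : a ≠ b) (m n : ℕ) :
    ZHoroball.dist (a, m) (b, n) ≤
      (max (max m n) ⌈Real.log |(a : ℝ) - (b : ℝ)|⌉₊ - m) +
      (max (max m n) ⌈Real.log |(a : ℝ) - (b : ℝ)|⌉₊ - n) + 1 := by
  set h : ℕ := max (max m n) ⌈Real.log |(a : ℝ) - (b : ℝ)|⌉₊
  obtain ⟨up, hup⟩ := ZHoroball.exists_walk_vertical a (k := m) (l := h) (by omega)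
  obtain ⟨down, hdown⟩ := ZHoroball.exists_walk_vertical b (k := n) (l := h) (by omega)
  have hlog : Real.log |(a : ℝ) - (b : ℝ)| ≤ h :=
    (Nat.le_ceil _).trans (Nat.cast_le.mpr (le_max_right _ _))
  have hcross := ZHoroball.adj_of_log_le hab hlog
  calc ZHoroball.dist (a, m) (b, n) ≤ (up.append (.cons hcross down.reverse)).length :=
        SimpleGraph.dist_le _
    _ = (h - m) + (h - n) + 1 := by
        rw [SimpleGraph.Walk.length_append, SimpleGraph.Walk.length_cons,
          SimpleGraph.Walk.length_reverse, hup, hdown]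
        omega
end

section
/- There is a universal constant C > 0 (independent of the graph) such that the following holds. Let X be a connected simple graph with graph metric d_X, let x and y be distinct vertices of X, and let a, b ∈ ℕ. Set h = ⌈log d_X(x, y)⌉ (natural logarithm, ceiling as a natural number) and H = max(h, a, b). Then the graph distance in the combinatorial horoball H(X) satisfies |d_{H(X)}((x, a), (y, b)) − ((H − a) + (H − b))| ≤ C. -/
/-- The combinatorial horoball over a graph `X`: vertices `V × ℕ`; `(x, n)` and `(y, n)` are
adjacent whenever `0 < d_X(x, y) ≤ exp n`, and `(x, n)` is adjacent to `(x, n + 1)`. -/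
def comboHoroball {V : Type*} (X : SimpleGraph V) : SimpleGraph (V × ℕ) where
  Adj u v :=
    (u.2 = v.2 ∧ 0 < X.dist u.1 v.1 ∧ (X.dist u.1 v.1 : ℝ) ≤ Real.exp u.2) ∨
    (u.1 = v.1 ∧ (u.2 = v.2 + 1 ∨ v.2 = u.2 + 1))
  symm := by
    constructor
    rintro ⟨x, m⟩ ⟨y, n⟩ (⟨h1, h2, h3⟩ | ⟨h1, h2⟩)
    · left
      refine ⟨h1.symm, by rwa [SimpleGraph.dist_comm], ?_⟩
      rw [SimpleGraph.dist_comm]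
      simp only at h1 ⊢
      rw [← h1]
      exact h3
    · exact Or.inr ⟨h1.symm, h2.symm⟩
  loopless := by
    constructor
    rintro ⟨x, n⟩ (⟨_, h2, _⟩ | ⟨_, h2 | h2⟩) <;> simp_all [SimpleGraph.dist_self]

/-!
The upper bound is the explicit path: climb from `(x, a)` to level `H`, where `d_X(x, y) ≤ exp H`
makes `(x, H)` and `(y, H)` adjacent, and descend to `(y, b)`.

For the lower bound, put `S(u, v) = d_X(u₁, v₁) + 2 exp u₂ + 2 exp v₂` and
`Φ(u, v) = 2 log S(u, v) - u₂ - v₂`. Moving `u` along one edge of `H(X)` changes `Φ` by at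
most `1`, and `Φ(u, u) = 2 log 4`, so `Φ(u, v) ≤ d_{H(X)}(u, v) + 2 log 4`. Since
`log S ≥ max (log d, a, b)`, we have `Φ((x, a), (y, b)) ≥ 2H - 2 - a - b`.
-/

open Real SimpleGraph

namespace ComboHoroball

variable {V : Type*} {X : SimpleGraph V}

lemma adj_succ (x : V) (n : ℕ) : (comboHoroball X).Adj (x, n) (x, n + 1) :=
  Or.inr ⟨rfl, Or.inr rfl⟩

lemma adj_of_dist_le_exp {x y : V} {n : ℕ} (hxy : 0 < X.dist x y)
    (h : (X.dist x y : ℝ) ≤ exp n) : (comboHoroball X).Adj (x, n) (y, n) :=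
  Or.inl ⟨rfl, hxy, h⟩

def levelZero : X →g comboHoroball X where
  toFun x := (x, 0)
  map_rel' h := by
    have hd : X.dist _ _ = 1 := dist_eq_one_iff_adj.2 h
    exact adj_of_dist_le_exp (by simp [hd]) (by simp [hd])

lemma reachable_vertical (x : V) (n : ℕ) : (comboHoroball X).Reachable (x, 0) (x, n) := by
  induction n with
  | zero => rfl
  | succ n ih => exact ih.trans (adj_succ x n).reachable

theorem connected (hX : X.Connected) : (comboHoroball X).Connected := by
  refine (connected_iff_exists_forall_reachable _).2 ⟨(hX.nonempty.some, 0), ?_⟩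
  rintro ⟨y, n⟩
  exact ((hX hX.nonempty.some y).map levelZero).trans (reachable_vertical y n)

lemma dist_vertical_le (hX : X.Connected) (x : V) (m k : ℕ) :
    (comboHoroball X).dist (x, m) (x, m + k) ≤ k := by
  induction k with
  | zero => simp
  | succ k ih =>
    calc (comboHoroball X).dist (x, m) (x, m + (k + 1))
        ≤ (comboHoroball X).dist (x, m) (x, m + k) +
            (comboHoroball X).dist (x, m + k) (x, m + k + 1) := (connected hX).dist_triangle
      _ ≤ k + 1 := by rw [dist_eq_one_iff_adj.2 (adj_succ x _)]; omega

lemma dist_horizontal_le_one (hX : X.Connected) {x y : V} {n : ℕ}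
    (h : (X.dist x y : ℝ) ≤ exp n) : (comboHoroball X).dist (x, n) (y, n) ≤ 1 := by
  rcases (X.dist x y).eq_zero_or_pos with h0 | hpos
  · simp [hX.dist_eq_zero_iff.1 h0]
  · exact (dist_eq_one_iff_adj.2 (adj_of_dist_le_exp hpos h)).le

theorem dist_le_of_dist_le_exp (hX : X.Connected) {x y : V} {a b H : ℕ}
    (ha : a ≤ H) (hb : b ≤ H)
    (h : (X.dist x y : ℝ) ≤ exp H) :
    (comboHoroball X).dist (x, a) (y, b) ≤ (H - a) + (H - b) + 1 := by
  obtain ⟨k, hk⟩ := Nat.exists_eq_add_of_le ha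
  obtain ⟨l, hl⟩ := Nat.exists_eq_add_of_le hb
  have hx := dist_vertical_le hX x a k
  have hy := dist_vertical_le hX y b l
  have hxy := dist_horizontal_le_one hX h
  rw [← hk] at hx
  rw [← hl, dist_comm] at hy
  have := (connected hX).dist_triangle (u := (x, a)) (v := (x, H)) (w := (y, b))
  have := (connected hX).dist_triangle (u := (x, H)) (v := (y, H)) (w := (y, b))
  omega

/-- `log (horoSize X u v)` is, up to a bounded error, the height `max (log d, m, n)` at which a
geodesic from `u = (x, m)` to `v = (y, n)` runs horizontally. -/
noncomputable def horoSize (X : SimpleGraph V) (u v : V × ℕ) : ℝ :=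
  X.dist u.1 v.1 + 2 * exp u.2 + 2 * exp v.2

noncomputable def horoPotential (X : SimpleGraph V) (u v : V × ℕ) : ℝ :=
  2 * log (horoSize X u v) - u.2 - v.2

lemma horoSize_pos (u v : V × ℕ) : 0 < horoSize X u v := by
  unfold horoSize; positivity

lemma horoPotential_self (u : V × ℕ) : horoPotential X u u = 2 * log 4 := by
  have : horoSize X u u = 4 * exp u.2 := by simp only [horoSize, dist_self]; push_cast; ring
  rw [horoPotential, this, log_mul (by norm_num) (exp_ne_zero _), log_exp]
  ring

lemma horoPotential_le_of_horoSize_le {u u' v : V × ℕ} (c : ℝ)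
    (h : horoSize X u v ≤ exp c * horoSize X u' v) :
    horoPotential X u v ≤ horoPotential X u' v + 2 * c + (u'.2 - u.2) := by
  have hlog := log_le_log (horoSize_pos u v) h
  rw [log_mul (exp_ne_zero c) (horoSize_pos u' v).ne', log_exp] at hlog
  unfold horoPotential
  linarith

/-- A horizontal edge changes `horoSize` by a factor at most `3 / 2 ≤ exp (1 / 2)`, a vertical
edge by a factor at most `exp 1`. -/
lemma horoPotential_le_of_adj (hX : X.Connected) {u u' v : V × ℕ}
    (h : (comboHoroball X).Adj u u') : horoPotential X u v ≤ horoPotential X u' v + 1 := by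
  obtain ⟨x, m⟩ := u
  obtain ⟨x', m'⟩ := u'
  rcases h with ⟨hm, -, hd⟩ | ⟨hx, hm | hm⟩ <;> dsimp only at hm
  · subst hm
    have htri : (X.dist x v.1 : ℝ) ≤ X.dist x x' + X.dist x' v.1 := by
      exact_mod_cast hX.dist_triangle
    have hsize : horoSize X (x, m) v ≤ exp (1 / 2) * horoSize X (x', m) v := by
      have := add_one_le_exp (1 / 2 : ℝ)
      have := (horoSize_pos (X := X) (x', m) v).le
      simp only [horoSize] at hd this ⊢
      nlinarith [exp_pos (v.2 : ℝ)]
    simpa using horoPotential_le_of_horoSize_le _ hsize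
  · obtain rfl : x = x' := hx
    subst hm
    have hsize : horoSize X (x, m' + 1) v ≤ exp 1 * horoSize X (x, m') v := by
      have := add_one_le_exp (1 : ℝ)
      simp only [horoSize, Nat.cast_add, Nat.cast_one, exp_add]
      nlinarith [exp_pos (v.2 : ℝ), exp_pos (m' : ℝ)]
    have := horoPotential_le_of_horoSize_le _ hsize
    push_cast at this
    linarith
  · obtain rfl : x = x' := hx
    subst hm
    have hsize : horoSize X (x, m) v ≤ exp 0 * horoSize X (x, m + 1) v := by
      simp only [horoSize, exp_zero, one_mul, Nat.cast_add, Nat.cast_one]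
      gcongr; linarith
    have := horoPotential_le_of_horoSize_le _ hsize
    push_cast at this
    linarith

lemma horoPotential_le_length (hX : X.Connected) {u v : V × ℕ} (p : (comboHoroball X).Walk u v) :
    horoPotential X u v ≤ p.length + 2 * log 4 := by
  induction p with
  | nil => simp [horoPotential_self]
  | @cons _ _ w h p ih =>
    rw [Walk.length_cons]
    push_cast
    linarith [horoPotential_le_of_adj (v := w) hX h]

lemma horoPotential_le_dist (hX : X.Connected) (u v : V × ℕ) :
    horoPotential X u v ≤ (comboHoroball X).dist u v + 2 * log 4 := by
  obtain ⟨p, hp⟩ := (connected hX).exists_walk_length_eq_dist u v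
  exact hp ▸ horoPotential_le_length hX p

lemma height_le_log_horoSize_left (u v : V × ℕ) : (u.2 : ℝ) ≤ log (horoSize X u v) := by
  rw [le_log_iff_exp_le (horoSize_pos u v), horoSize]
  linarith [exp_pos (u.2 : ℝ), exp_pos (v.2 : ℝ), (X.dist u.1 v.1).cast_nonneg (α := ℝ)]

lemma height_le_log_horoSize_right (u v : V × ℕ) : (v.2 : ℝ) ≤ log (horoSize X u v) := by
  rw [le_log_iff_exp_le (horoSize_pos u v), horoSize]
  linarith [exp_pos (u.2 : ℝ), exp_pos (v.2 : ℝ), (X.dist u.1 v.1).cast_nonneg (α := ℝ)]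

lemma log_dist_le_log_horoSize (u v : V × ℕ) :
    log (X.dist u.1 v.1) ≤ log (horoSize X u v) := by
  rcases (X.dist u.1 v.1).eq_zero_or_pos with h0 | hpos
  · rw [h0, Nat.cast_zero, log_zero]
    exact u.2.cast_nonneg.trans (height_le_log_horoSize_left u v)
  · refine log_le_log (by exact_mod_cast hpos) ?_
    unfold horoSize
    linarith [exp_pos (u.2 : ℝ), exp_pos (v.2 : ℝ)]

theorem two_mul_max_sub_le_dist (hX : X.Connected) (x y : V) (a b : ℕ) :
    2 * ((max (max ⌈log (X.dist x y)⌉₊ a) b : ℕ) : ℝ) - a - b - (2 + 2 * log 4) ≤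
      (comboHoroball X).dist (x, a) (y, b) := by
  have hceil : (⌈log (X.dist x y)⌉₊ : ℝ) ≤ log (horoSize X (x, a) (y, b)) + 1 :=
    (Nat.ceil_lt_add_one (log_natCast_nonneg _)).le.trans
      (by linarith [log_dist_le_log_horoSize (X := X) (x, a) (y, b)])
  have hH : ((max (max ⌈log (X.dist x y)⌉₊ a) b : ℕ) : ℝ) ≤
      log (horoSize X (x, a) (y, b)) + 1 := by
    push_cast
    refine max_le (max_le hceil ?_) ?_
    · linarith [height_le_log_horoSize_left (X := X) (x, a) (y, b)]
    · linarith [height_le_log_horoSize_right (X := X) (x, a) (y, b)]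
  have := horoPotential_le_dist hX (x, a) (y, b)
  unfold horoPotential at this
  dsimp only at this
  linarith

end ComboHoroball

/-- There is a universal constant `C` such that in any combinatorial horoball `H(X)` over a
connected graph `X`, the distance between `(x, a)` and `(y, b)` differs from
`(H − a) + (H − b)` by at most `C`, where `H = max(⌈log d_X(x, y)⌉, a, b)`. -/
theorem stmt8 : ∃ C : ℝ, 0 < C ∧
    ∀ (V : Type) (X : SimpleGraph V), X.Connected →
      ∀ x y : V, x ≠ y → ∀ a b : ℕ,
        |((comboHoroball X).dist (x, a) (y, b) : ℝ) -
          (((max (max ⌈Real.log (X.dist x y : ℝ)⌉₊ a) b - a : ℕ) : ℝ) +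
           ((max (max ⌈Real.log (X.dist x y : ℝ)⌉₊ a) b - b : ℕ) : ℝ))| ≤ C := by
  refine ⟨2 + 2 * log 4, by positivity, fun V X hX x y _ a b => ?_⟩
  set H := max (max ⌈log (X.dist x y : ℝ)⌉₊ a) b
  have ha : a ≤ H := le_max_of_le_left (le_max_right _ _)
  have hb : b ≤ H := le_max_right _ _
  have hd : (X.dist x y : ℝ) ≤ exp H := (le_exp_log _).trans (exp_le_exp.2
    ((Nat.le_ceil _).trans (by exact_mod_cast le_max_of_le_left (le_max_left _ _))))
  have hupper :
      ((comboHoroball X).dist (x, a) (y, b) : ℝ) ≤ (H - a : ℕ) + (H - b : ℕ) + 1 := by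
    exact_mod_cast ComboHoroball.dist_le_of_dist_le_exp hX ha hb hd
  have hlower := ComboHoroball.two_mul_max_sub_le_dist hX x y a b
  have hlog4 := log_nonneg (show (1 : ℝ) ≤ 4 by norm_num)
  rw [Nat.cast_sub ha, Nat.cast_sub hb] at hupper ⊢
  rw [abs_le]
  constructor <;> linarith
end

section
/- For all real k ≥ 1 and c ≥ 0 there is a constant C ≥ 0, depending only on k and c, such that the following holds. Let A and B be connected simple graphs with graph metrics d_A and d_B, and let q be a map from the vertices of A to the vertices of B such that (1/k)·d_A(x, y) − c ≤ d_B(q x, q y) ≤ k·d_A(x, y) + c for all vertices x, y of A, and every vertex of B is within d_B-distance c of the image of q. Then the induced map q̂(x, n) = (q x, n) from the vertices of the combinatorial horoball H(A) to the vertices of H(B) is a (1, C)-quasi-isometry: |d_{H(B)}(q̂ u, q̂ v) − d_{H(A)}(u, v)| ≤ C for all vertices u, v of H(A), and every vertex of H(B) is within d_{H(B)}-distance C of the image of q̂. -/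
/-!
In the horoball over a connected graph `X`, the distance from `(x, n)` to `(y, m)` equals
`max (|m - n|, 2 log d - n - m)` up to an additive error `3`, where `d = max (d_X(x, y), 1)`.
The upper bound is a walk that climbs to level `⌈log d⌉`, where `x` and `y` are adjacent, and
descends again. The lower bound holds because this estimate, centred at `(x, n)` and suitably
shifted, grows by at most `1` along each edge. A `(k, c)`-quasi-isometry changes `log d` by at most
`log (k (1 + k c))`, so it moves the estimate, and hence the horoball distance, by a bounded amount.
-/

open Real SimpleGraph

noncomputable def horoEstimate (ℓ : ℝ) (n m : ℕ) : ℝ :=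
  max |(m : ℝ) - n| (2 * ℓ - n - m)

noncomputable def logDist {V : Type*} (X : SimpleGraph V) (x y : V) : ℝ :=
  log (max (X.dist x y : ℝ) 1)

lemma abs_horoEstimate_sub_le {a b s : ℝ} (h : |a - b| ≤ s) (n m : ℕ) :
    |horoEstimate a n m - horoEstimate b n m| ≤ 2 * s := by
  refine (abs_max_sub_max_le_max _ _ _ _).trans (max_le ?_ ?_)
  · rw [sub_self, abs_zero]
    linarith [(abs_nonneg _).trans h]
  · rw [show 2 * a - n - m - (2 * b - n - m) = 2 * (a - b) by ring, abs_mul, abs_two]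
    linarith

lemma horoEstimate_le_add_one {ℓ : ℝ} {n m m' : ℕ} (h : m ≤ m' + 1) (h' : m' ≤ m + 1) :
    horoEstimate ℓ n m' ≤ horoEstimate ℓ n m + 1 := by
  have h₁ : (m : ℝ) ≤ m' + 1 := by exact_mod_cast h
  have h₂ : (m' : ℝ) ≤ m + 1 := by exact_mod_cast h'
  have hm : |(m' : ℝ) - m| ≤ 1 := abs_le.2 ⟨by linarith, by linarith⟩
  have := abs_sub_le (m' : ℝ) m n
  unfold horoEstimate
  refine max_le ?_ ?_
  · linarith [le_max_left |(m : ℝ) - n| (2 * ℓ - n - m)]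
  · linarith [le_max_right |(m : ℝ) - n| (2 * ℓ - n - m), abs_le.1 hm]

lemma horoEstimate_self_le {ℓ K : ℝ} (hℓ : ℓ ≤ K) (hK : 0 ≤ K) (n : ℕ) :
    horoEstimate ℓ n n ≤ 2 * K := by
  refine max_le (by simpa using hK) ?_
  linarith [(Nat.cast_nonneg n : (0 : ℝ) ≤ n)]

lemma log_max_one_le_of_le_add {a b t : ℝ} (ht : 0 < t) (h : b ≤ a + t) :
    log (max b 1) ≤ max (log (4 * t)) (log (max a 1) + 1 / 2) := by
  rcases le_total b 1 with hb1 | hb1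
  · rw [max_eq_right hb1, log_one]
    exact le_max_of_le_right (by linarith [log_nonneg (le_max_right a 1)])
  rw [max_eq_left hb1]
  rcases le_total b (4 * t) with hbt | hbt
  · exact le_max_of_le_left (log_le_log (by linarith) hbt)
  refine le_max_of_le_right ?_
  have hba : b ≤ 4 / 3 * max a 1 := by linarith [le_max_left a 1]
  have h43 : log (4 / 3) ≤ 1 / 2 := by
    linarith [log_le_sub_one_of_pos (by norm_num : (0 : ℝ) < 4 / 3)]
  calc log b ≤ log (4 / 3 * max a 1) := log_le_log (by linarith) hba
    _ = log (4 / 3) + log (max a 1) := log_mul (by norm_num) (by positivity)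
    _ ≤ log (max a 1) + 1 / 2 := by linarith

lemma log_max_one_le_of_le_mul_add {a b k c : ℝ} (hk : 1 ≤ k) (hc : 0 ≤ c)
    (h : a ≤ k * b + c) : log (max a 1) ≤ log (max b 1) + log (k * (1 + c)) := by
  have hM : 1 ≤ max b 1 := le_max_right b 1
  have hkM : 1 ≤ k * max b 1 := by nlinarith
  have key : max a 1 ≤ k * (1 + c) * max b 1 := by
    refine max_le ?_ (by nlinarith)
    nlinarith [le_max_left b 1]
  calc log (max a 1) ≤ log (k * (1 + c) * max b 1) := log_le_log (by positivity) key
    _ = log (max b 1) + log (k * (1 + c)) := by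
      rw [log_mul (by positivity) (by positivity)]; ring

lemma abs_log_max_one_sub_le {a b k c : ℝ} (hk : 1 ≤ k) (hc : 0 ≤ c)
    (h₁ : 1 / k * a - c ≤ b) (h₂ : b ≤ k * a + c) :
    |log (max a 1) - log (max b 1)| ≤ log (k * (1 + k * c)) := by
  have hk0 : 0 < k := by linarith
  have hab : a ≤ k * b + k * c := by
    have := mul_le_mul_of_nonneg_left h₁ hk0.le
    rw [mul_sub, ← mul_assoc, mul_one_div_cancel hk0.ne', one_mul] at this
    linarith
  have hba : b ≤ k * a + k * c := h₂.trans (by nlinarith [le_mul_of_one_le_left hc hk])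
  have hkc : 0 ≤ k * c := by positivity
  rw [abs_le]
  constructor
  · linarith [log_max_one_le_of_le_mul_add hk hkc hba]
  · linarith [log_max_one_le_of_le_mul_add hk hkc hab]

section Horoball

variable {V : Type*} (X : SimpleGraph V)

lemma comboHoroball_adj_succ (x : V) (n : ℕ) : (comboHoroball X).Adj (x, n) (x, n + 1) :=
  Or.inr ⟨rfl, Or.inr rfl⟩

lemma exists_comboHoroball_walk_vertical (x : V) {n m : ℕ} (h : n ≤ m) :
    ∃ w : (comboHoroball X).Walk (x, n) (x, m), w.length = m - n := by
  induction m, h using Nat.le_induction with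
  | base => exact ⟨.nil, by simp⟩
  | succ m hnm ih =>
    obtain ⟨w, hw⟩ := ih
    exact ⟨w.concat (comboHoroball_adj_succ X x m), by rw [Walk.length_concat, hw]; omega⟩

lemma exists_comboHoroball_walk_length_eq_abs (x : V) (n m : ℕ) :
    ∃ w : (comboHoroball X).Walk (x, n) (x, m), (w.length : ℝ) = |(m : ℝ) - n| := by
  rcases le_total n m with h | h
  · obtain ⟨w, hw⟩ := exists_comboHoroball_walk_vertical X x h
    refine ⟨w, ?_⟩
    rw [hw, Nat.cast_sub h, abs_of_nonneg (by simpa using h)]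
  · obtain ⟨w, hw⟩ := exists_comboHoroball_walk_vertical X x h
    refine ⟨w.reverse, ?_⟩
    rw [Walk.length_reverse, hw, Nat.cast_sub h, abs_of_nonpos (by simpa using h)]
    ring

lemma exists_comboHoroball_walk_length_le (hX : X.Connected) (x y : V) (n m : ℕ) :
    ∃ w : (comboHoroball X).Walk (x, n) (y, m),
      (w.length : ℝ) ≤ horoEstimate (logDist X x y) n m + 3 := by
  by_cases hxy : x = y
  · subst hxy
    obtain ⟨w, hw⟩ := exists_comboHoroball_walk_length_eq_abs X x n m
    have := le_max_left |(m : ℝ) - n| (2 * logDist X x x - n - m)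
    exact ⟨w, by unfold horoEstimate; linarith⟩
  have hd : 1 ≤ X.dist x y := hX.pos_dist_of_ne hxy
  have hd' : (1 : ℝ) ≤ X.dist x y := by exact_mod_cast hd
  have hlog : logDist X x y = log (X.dist x y) := by rw [logDist, max_eq_left hd']
  set N := max (max n m) ⌈logDist X x y⌉₊
  have hnN : n ≤ N := le_trans (le_max_left n m) (le_max_left _ _)
  have hmN : m ≤ N := le_trans (le_max_right n m) (le_max_left _ _)
  have hadj : (comboHoroball X).Adj (x, N) (y, N) := by
    refine Or.inl ⟨rfl, hd, ?_⟩
    calc (X.dist x y : ℝ) = exp (logDist X x y) := by rw [hlog, exp_log (by linarith)]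
      _ ≤ exp N := exp_le_exp.2 ((Nat.le_ceil _).trans (by exact_mod_cast le_max_right _ _))
  obtain ⟨w₁, hw₁⟩ := exists_comboHoroball_walk_vertical X x hnN
  obtain ⟨w₂, hw₂⟩ := exists_comboHoroball_walk_vertical X y hmN
  refine ⟨(w₁.concat hadj).append w₂.reverse, ?_⟩
  rw [Walk.length_append, Walk.length_concat, Walk.length_reverse, hw₁, hw₂]
  push_cast [Nat.cast_sub hnN, Nat.cast_sub hmN]
  have hest := le_max_right |(m : ℝ) - n| (2 * logDist X x y - n - m)
  have hest' := le_max_left |(m : ℝ) - n| (2 * logDist X x y - n - m)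
  unfold horoEstimate
  rcases le_total ⌈logDist X x y⌉₊ (max n m) with hc | hc
  · have hN : (N : ℝ) = max (m : ℝ) n := by
      simp only [N, max_eq_left hc, Nat.cast_max, max_comm]
    linarith [max_sub_min_eq_abs' (m : ℝ) n, min_add_max (m : ℝ) n]
  · have hN : (N : ℝ) < logDist X x y + 1 := by
      simp only [N, max_eq_right hc]
      exact Nat.ceil_lt_add_one (by rw [hlog]; exact log_nonneg hd')
    linarith

lemma comboHoroball_connected (hX : X.Connected) : (comboHoroball X).Connected := by
  obtain ⟨x⟩ := hX.nonempty
  refine (connected_iff_exists_forall_reachable _).2 ⟨(x, 0), fun ⟨y, m⟩ => ?_⟩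
  obtain ⟨w, -⟩ := exists_comboHoroball_walk_length_le X hX x y 0 m
  exact w.reachable

lemma comboHoroball_dist_le (hX : X.Connected) (x y : V) (n m : ℕ) :
    ((comboHoroball X).dist (x, n) (y, m) : ℝ) ≤ horoEstimate (logDist X x y) n m + 3 := by
  obtain ⟨w, hw⟩ := exists_comboHoroball_walk_length_le X hX x y n m
  exact le_trans (by exact_mod_cast dist_le w) hw

/- The shift by `2 log 2` absorbs the growth of `log d(x, ·)` along a long horizontal edge. -/
lemma horoEstimate_potential_le_of_adj (hX : X.Connected) (x : V) (n : ℕ) {p p' : V × ℕ}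
    (h : (comboHoroball X).Adj p p') :
    horoEstimate (logDist X x p'.1 - 2 * log 2) n p'.2 ≤
      horoEstimate (logDist X x p.1 - 2 * log 2) n p.2 + 1 := by
  obtain ⟨y, i⟩ := p
  obtain ⟨y', i'⟩ := p'
  rcases h with ⟨rfl, -, hyy'⟩ | ⟨rfl, hi⟩
  · have htri : (X.dist x y' : ℝ) ≤ X.dist x y + exp i :=
      le_trans (by exact_mod_cast hX.dist_triangle) (add_le_add_right hyy' _)
    have hlog := log_max_one_le_of_le_add (exp_pos _) htri
    rw [log_mul (by norm_num) (exp_pos _).ne', log_exp,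
      show (4 : ℝ) = 2 ^ 2 by norm_num, log_pow, Nat.cast_ofNat] at hlog
    simp only [horoEstimate, logDist] at hlog ⊢
    set L := log (max (X.dist x y : ℝ) 1)
    have h₁ := le_max_left |(i : ℝ) - n| (2 * (L - 2 * log 2) - n - i)
    have h₂ := le_max_right |(i : ℝ) - n| (2 * (L - 2 * log 2) - n - i)
    refine max_le (by linarith) ?_
    rcases le_max_iff.1 hlog with hlog | hlog
    · linarith [le_abs_self ((i : ℝ) - n)]
    · linarith
  · exact horoEstimate_le_add_one (by omega) (by omega)

lemma horoEstimate_potential_le_of_walk (hX : X.Connected) (x : V) (n : ℕ) {p p' : V × ℕ}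
    (w : (comboHoroball X).Walk p p') :
    horoEstimate (logDist X x p'.1 - 2 * log 2) n p'.2 ≤
      horoEstimate (logDist X x p.1 - 2 * log 2) n p.2 + w.length := by
  induction w with
  | nil => simp
  | cons h _ ih =>
    rw [Walk.length_cons, Nat.cast_succ]
    linarith [horoEstimate_potential_le_of_adj X hX x n h]

lemma horoEstimate_le_comboHoroball_dist (hX : X.Connected) (x y : V) (n m : ℕ) :
    horoEstimate (logDist X x y) n m ≤ (comboHoroball X).dist (x, n) (y, m) + 4 * log 2 := by
  have hlog2 : 0 ≤ log 2 := log_nonneg one_le_two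
  obtain ⟨w, hw⟩ :=
    ((comboHoroball_connected X hX).preconnected (x, n) (y, m)).exists_walk_length_eq_dist
  have hpot := horoEstimate_potential_le_of_walk X hX x n w
  have hbase : horoEstimate (logDist X x x - 2 * log 2) n n ≤ 2 * 0 :=
    horoEstimate_self_le (by simpa [logDist] using hlog2) le_rfl n
  have hshift := abs_horoEstimate_sub_le (a := logDist X x y) (b := logDist X x y - 2 * log 2)
    (by rw [sub_sub_cancel, abs_of_nonneg (by positivity)]) n m
  rw [hw] at hpot
  linarith [(abs_le.1 hshift).2]

lemma abs_comboHoroball_dist_sub_horoEstimate_le (hX : X.Connected) (x y : V) (n m : ℕ) :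
    |((comboHoroball X).dist (x, n) (y, m) : ℝ) - horoEstimate (logDist X x y) n m| ≤ 3 := by
  have h2 : 4 * log 2 ≤ 3 := by linarith [log_two_lt_d9]
  rw [abs_le]
  constructor
  · linarith [horoEstimate_le_comboHoroball_dist X hX x y n m]
  · linarith [comboHoroball_dist_le X hX x y n m]

end Horoball

/-- A `(k, c)`-quasi-isometry of connected graphs induces a `(1, C)`-quasi-isometry of their
combinatorial horoballs, where `C` depends only on `k` and `c`. -/
theorem stmt9 (k c : ℝ) (hk : 1 ≤ k) (hc : 0 ≤ c) :
    ∃ C : ℝ, 0 ≤ C ∧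
      ∀ (VA VB : Type) (A : SimpleGraph VA) (B : SimpleGraph VB),
        A.Connected → B.Connected →
        ∀ q : VA → VB,
          (∀ x y : VA,
            (1 / k) * (A.dist x y : ℝ) - c ≤ (B.dist (q x) (q y) : ℝ) ∧
            (B.dist (q x) (q y) : ℝ) ≤ k * (A.dist x y : ℝ) + c) →
          (∀ v : VB, ∃ x : VA, (B.dist v (q x) : ℝ) ≤ c) →
          (∀ u v : VA × ℕ,
            |((comboHoroball B).dist (q u.1, u.2) (q v.1, v.2) : ℝ) -
              ((comboHoroball A).dist u v : ℝ)| ≤ C) ∧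
          (∀ w : VB × ℕ, ∃ u : VA × ℕ,
            ((comboHoroball B).dist w (q u.1, u.2) : ℝ) ≤ C) := by
  set K := log (k * (1 + k * c))
  have hK : 0 ≤ K := log_nonneg (by nlinarith [mul_nonneg (by linarith : (0 : ℝ) ≤ k) hc])
  refine ⟨2 * K + 6, by positivity, fun VA VB A B hA hB q hq hcov => ⟨?_, ?_⟩⟩
  · rintro ⟨x, n⟩ ⟨y, m⟩
    have hlog : |logDist A x y - logDist B (q x) (q y)| ≤ K :=
      abs_log_max_one_sub_le hk hc (hq x y).1 (hq x y).2
    have hE := abs_le.1 (abs_horoEstimate_sub_le hlog n m)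
    have hdA := abs_le.1 (abs_comboHoroball_dist_sub_horoEstimate_le A hA x y n m)
    have hdB := abs_le.1 (abs_comboHoroball_dist_sub_horoEstimate_le B hB (q x) (q y) n m)
    exact abs_le.2 ⟨by linarith, by linarith⟩
  · rintro ⟨v, j⟩
    obtain ⟨x, hx⟩ := hcov v
    have hlog : logDist B v (q x) ≤ K := by
      have := log_max_one_le_of_le_mul_add (b := 0) (c := k * c) hk (by positivity)
        (by simpa using hx.trans (le_mul_of_one_le_left hc hk))
      rwa [max_eq_right zero_le_one, log_one, zero_add] at this
    exact ⟨(x, j), (comboHoroball_dist_le B hB v (q x) j j).trans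
      (by linarith [horoEstimate_self_le hlog hK j])⟩
end

section
/- There is a universal constant δ ≥ 0 (independent of the graph) such that for every connected simple graph X, the combinatorial horoball H(X) is δ-hyperbolic in the four-point sense: for all vertices w, x, y, z of H(X), d(w, x) + d(y, z) ≤ max(d(w, y) + d(x, z), d(w, z) + d(x, y)) + δ, where d = d_{H(X)}. -/
/-! Write `apex p q := log (max (exp p.2, exp q.2, d_X(p.1, q.1)))` for the height at which a
geodesic from `p` to `q` turns around. Climbing to level `⌈apex p q⌉`, crossing by one horizontal
edge and descending shows `d(p, q) ≤ 2 apex p q - p.2 - q.2 + 3`. Conversely, along a path of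
length `L` from level `m` to level `n` the base point moves by at most `3 exp ((L + m + n) / 2)`,
because a horizontal edge at level `k` moves it by at most `exp k`; this gives
`2 apex p q - p.2 - q.2 ≤ d(p, q) + 2 log 3`. The triangle inequality of `X` makes `apex` an
ultrametric up to `log 2`, and any function within bounded distance of `2 m(p, q) - f p - f q`,
with `m` an approximate ultrametric, satisfies the four-point condition. -/

def FourPointCondition {α : Type*} (d : α → α → ℝ) (δ : ℝ) : Prop :=
  ∀ w x y z, d w x + d y z ≤ max (d w y + d x z) (d w z + d x y) + δ

theorem add_le_max_add_of_le_max {a b c d p q : ℝ} (hp₁ : p ≤ max a d) (hp₂ : p ≤ max c b)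
    (hq₁ : q ≤ max a c) (hq₂ : q ≤ max d b) : p + q ≤ max (a + b) (c + d) := by
  rw [le_max_iff] at hp₁ hp₂ hq₁ hq₂
  rcases le_total (a + b) (c + d) with h | h <;> [rw [max_eq_right h]; rw [max_eq_left h]] <;>
    rcases hp₁ with _ | _ <;> rcases hp₂ with _ | _ <;> rcases hq₁ with _ | _ <;>
    rcases hq₂ with _ | _ <;> linarith

section FourPoint

variable {α : Type*} {m : α → α → ℝ} {C : ℝ}

theorem FourPointCondition.of_approx_ultrametric (hsymm : ∀ p q, m p q = m q p)
    (hultra : ∀ p q r, m p q ≤ max (m p r) (m q r) + C) : FourPointCondition m (2 * C) := by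
  intro w x y z
  have hsub : ∀ p q r, m p q - C ≤ max (m p r) (m q r) := fun p q r => by
    linarith [hultra p q r]
  have h₃ := hsub y z w
  have h₄ := hsub y z x
  rw [hsymm y w, hsymm z w] at h₃
  rw [hsymm y x, hsymm z x] at h₄
  linarith [add_le_max_add_of_le_max (hsub w x y) (hsub w x z) h₃ h₄]

theorem FourPointCondition.of_near_approx_ultrametric {d : α → α → ℝ} (f : α → ℝ) {A B : ℝ}
    (hsymm : ∀ p q, m p q = m q p) (hultra : ∀ p q r, m p q ≤ max (m p r) (m q r) + C)
    (hlow : ∀ p q, 2 * m p q - f p - f q ≤ d p q + A)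
    (hup : ∀ p q, d p q ≤ 2 * m p q - f p - f q + B) :
    FourPointCondition d (2 * A + 2 * B + 4 * C) := by
  intro w x y z
  have hm := of_approx_ultrametric hsymm hultra w x y z
  have h₁ := add_le_add (hlow w y) (hlow x z)
  have h₂ := add_le_add (hlow w z) (hlow x y)
  have h₃ := add_le_add (hup w x) (hup y z)
  rcases max_cases (m w y + m x z) (m w z + m x y) with ⟨e, -⟩ | ⟨e, -⟩ <;> rw [e] at hm
  · linarith [le_max_left (d w y + d x z) (d w z + d x y)]
  · linarith [le_max_right (d w y + d x z) (d w z + d x y)]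

end FourPoint

open SimpleGraph Real

namespace comboHoroball

variable {V : Type*} {X : SimpleGraph V}

theorem adj_succ (x : V) (n : ℕ) : (comboHoroball X).Adj (x, n) (x, n + 1) :=
  Or.inr ⟨rfl, Or.inr rfl⟩

theorem adj_zero_of_adj {x y : V} (h : X.Adj x y) : (comboHoroball X).Adj (x, 0) (y, 0) :=
  Or.inl ⟨rfl, by simp [dist_eq_one_iff_adj.2 h]⟩

theorem snd_le_snd_add_one_of_adj {p q : V × ℕ} (h : (comboHoroball X).Adj p q) :
    p.2 ≤ q.2 + 1 := by
  rcases h with ⟨h, -⟩ | ⟨-, h | h⟩ <;> omega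

theorem reachable_zero (x : V) (n : ℕ) : (comboHoroball X).Reachable (x, 0) (x, n) := by
  induction n with
  | zero => rfl
  | succ n ih => exact ih.trans (adj_succ x n).reachable

theorem connected (hX : X.Connected) : (comboHoroball X).Connected := by
  let f : X →g comboHoroball X := ⟨fun x => (x, 0), adj_zero_of_adj⟩
  refine (connected_iff _).2 ⟨fun ⟨x, m⟩ ⟨y, n⟩ => ?_, hX.nonempty.map f⟩
  exact (reachable_zero x m).symm.trans (((hX.preconnected x y).map f).trans (reachable_zero y n))

theorem dist_le_of_le (x : V) {m n : ℕ} (h : m ≤ n) :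
    (comboHoroball X).dist (x, m) (x, n) ≤ n - m := by
  obtain ⟨t, rfl⟩ := Nat.exists_eq_add_of_le h
  rw [Nat.add_sub_cancel_left]
  induction t with
  | zero => simp
  | succ t ih =>
    have hadj := adj_succ (X := X) x (m + t)
    have htri := hadj.reachable.dist_triangle_right (x, m)
    rw [dist_eq_one_iff_adj.2 hadj] at htri
    rw [← add_assoc]
    exact htri.trans (Nat.add_le_add_right (ih (Nat.le_add_right m t)) 1)

theorem dist_le_one_of_dist_le_exp (hX : X.Connected) {x y : V} {n : ℕ}
    (h : (X.dist x y : ℝ) ≤ exp n) : (comboHoroball X).dist (x, n) (y, n) ≤ 1 := by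
  rcases eq_or_ne x y with rfl | hxy
  · simp
  · exact (dist_eq_one_iff_adj.2 (Or.inl ⟨rfl, hX.pos_dist_of_ne hxy, h⟩)).le

theorem snd_le_snd_add_length {p q : V × ℕ} (w : (comboHoroball X).Walk p q) :
    p.2 ≤ q.2 + w.length := by
  induction w with
  | nil => simp
  | cons h w ih => rw [Walk.length_cons]; have := snd_le_snd_add_one_of_adj h; omega

noncomputable def apex (X : SimpleGraph V) (p q : V × ℕ) : ℝ :=
  log (max (max (exp p.2) (exp q.2)) (X.dist p.1 q.1))

theorem exp_apex (p q : V × ℕ) :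
    exp (apex X p q) = max (max (exp p.2) (exp q.2)) (X.dist p.1 q.1) :=
  exp_log (lt_max_of_lt_left (lt_max_of_lt_left (exp_pos _)))

theorem apex_comm (p q : V × ℕ) : apex X p q = apex X q p := by
  rw [apex, apex, max_comm (exp (p.2 : ℝ)), SimpleGraph.dist_comm]

theorem snd_le_apex (p q : V × ℕ) : (p.2 : ℝ) ≤ apex X p q := by
  rw [← exp_le_exp, exp_apex]
  exact le_max_of_le_left (le_max_left _ _)

theorem dist_fst_le_exp_apex (p q : V × ℕ) : (X.dist p.1 q.1 : ℝ) ≤ exp (apex X p q) := by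
  rw [exp_apex]
  exact le_max_right _ _

theorem apex_le_max_add_log_two (hX : X.Connected) (p q r : V × ℕ) :
    apex X p q ≤ max (apex X p r) (apex X q r) + log 2 := by
  rw [← exp_le_exp, exp_add, exp_log two_pos, exp_monotone.map_max]
  have hp : exp (p.2 : ℝ) ≤ exp (apex X p r) := exp_le_exp.2 (snd_le_apex p r)
  have hq : exp (q.2 : ℝ) ≤ exp (apex X q r) := exp_le_exp.2 (snd_le_apex q r)
  have hpq : (X.dist p.1 q.1 : ℝ) ≤ X.dist p.1 r.1 + X.dist q.1 r.1 := by
    rw [SimpleGraph.dist_comm (u := q.1)]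
    exact_mod_cast hX.dist_triangle
  have hpr := dist_fst_le_exp_apex (X := X) p r
  have hqr := dist_fst_le_exp_apex (X := X) q r
  rw [exp_apex]
  refine max_le (max_le ?_ ?_) ?_ <;>
    linarith [le_max_left (exp (apex X p r)) (exp (apex X q r)),
      le_max_right (exp (apex X p r)) (exp (apex X q r)), exp_pos (apex X p r),
      exp_pos (apex X q r)]

theorem dist_le_two_mul_apex (hX : X.Connected) (p q : V × ℕ) :
    ((comboHoroball X).dist p q : ℝ) ≤ 2 * apex X p q - p.2 - q.2 + 3 := by
  obtain ⟨x, m⟩ := p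
  obtain ⟨y, n⟩ := q
  set k := ⌈apex X (x, m) (y, n)⌉₊
  have hk : apex X (x, m) (y, n) ≤ k := Nat.le_ceil _
  have hm : m ≤ k := by exact_mod_cast (snd_le_apex (x, m) (y, n)).trans hk
  have hn : n ≤ k := by
    exact_mod_cast (snd_le_apex (X := X) (y, n) (x, m)).trans (apex_comm (x, m) (y, n) ▸ hk)
  have hxy : (comboHoroball X).dist (x, k) (y, k) ≤ 1 :=
    dist_le_one_of_dist_le_exp hX ((dist_fst_le_exp_apex (x, m) (y, n)).trans (exp_le_exp.2 hk))
  have htri := (connected hX).dist_triangle (u := (x, m)) (v := (x, k)) (w := (y, n))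
  have htri' := (connected hX).dist_triangle (u := (x, k)) (v := (y, k)) (w := (y, n))
  have hup : (comboHoroball X).dist (x, m) (y, n) + m + n ≤ 2 * k + 1 := by
    have := dist_le_of_le (X := X) x hm
    have := dist_le_of_le (X := X) y hn
    rw [SimpleGraph.dist_comm (u := (y, k))] at htri'
    omega
  have hk' : (k : ℝ) < apex X (x, m) (y, n) + 1 :=
    Nat.ceil_lt_add_one ((Nat.cast_nonneg m).trans (snd_le_apex (x, m) (y, n)))
  have : ((comboHoroball X).dist (x, m) (y, n) : ℝ) + m + n ≤ 2 * k + 1 := by exact_mod_cast hup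
  linarith

theorem dist_fst_le_of_walk (hX : X.Connected) {p q : V × ℕ} (w : (comboHoroball X).Walk p q) :
    (X.dist p.1 q.1 : ℝ) ≤ 3 * exp ((w.length + p.2 + q.2 : ℝ) / 2) := by
  induction w with
  | nil => simp only [SimpleGraph.dist_self, CharP.cast_eq_zero]; positivity
  | @cons u x v h w ih =>
    have hxu : x.2 ≤ u.2 + 1 := snd_le_snd_add_one_of_adj h.symm
    rw [Walk.length_cons, Nat.cast_succ]
    rcases h with ⟨hux, -, hle⟩ | ⟨hux, -⟩
    · have hlev : (u.2 : ℝ) ≤ v.2 + w.length := by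
        rw [hux]; exact_mod_cast snd_le_snd_add_length w
      have htri : (X.dist u.1 v.1 : ℝ) ≤ X.dist u.1 x.1 + X.dist x.1 v.1 := by
        exact_mod_cast hX.dist_triangle
      have hu : exp (u.2 : ℝ) ≤ exp ((w.length + 1 + u.2 + v.2 : ℝ) / 2) :=
        exp_le_exp.2 (by linarith)
      -- the edge moves the base point by at most `exp u.2`, while the extra step multiplies the
      -- bound by `exp (1 / 2) ≥ 3 / 2`; the constant 3 is chosen so that `1 + 3 * (2 / 3) ≤ 3`
      have hhalf : 3 / 2 ≤ exp (1 / 2 : ℝ) := by linarith [add_one_le_exp (1 / 2 : ℝ)]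
      have hshift : exp ((w.length + x.2 + v.2 : ℝ) / 2) * exp (1 / 2) =
          exp ((w.length + 1 + u.2 + v.2 : ℝ) / 2) := by
        rw [← exp_add, hux]; ring_nf
      nlinarith [exp_pos ((w.length + x.2 + v.2 : ℝ) / 2)]
    · have hxu' : (x.2 : ℝ) ≤ u.2 + 1 := by exact_mod_cast hxu
      rw [hux]
      exact ih.trans (mul_le_mul_of_nonneg_left (exp_le_exp.2 (by linarith)) (by norm_num))

theorem two_mul_apex_le_dist (hX : X.Connected) (p q : V × ℕ) :
    2 * apex X p q - p.2 - q.2 ≤ (comboHoroball X).dist p q + 2 * log 3 := by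
  obtain ⟨w, hw⟩ := (connected hX).exists_walk_length_eq_dist p q
  have hpq : (p.2 : ℝ) ≤ q.2 + w.length := by exact_mod_cast snd_le_snd_add_length w
  have hqp : (q.2 : ℝ) ≤ p.2 + w.length := by
    exact_mod_cast w.length_reverse ▸ snd_le_snd_add_length w.reverse
  have hexp : ∀ n : ℕ, (n : ℝ) ≤ (w.length + p.2 + q.2 : ℝ) / 2 →
      exp (n : ℝ) ≤ 3 * exp ((w.length + p.2 + q.2 : ℝ) / 2) := fun n hn => by
    linarith [exp_le_exp.2 hn, exp_pos ((w.length + p.2 + q.2 : ℝ) / 2)]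
  have hapex : apex X p q ≤ log 3 + (w.length + p.2 + q.2 : ℝ) / 2 := by
    rw [← exp_le_exp, exp_add, exp_log three_pos, exp_apex]
    exact max_le (max_le (hexp _ (by linarith)) (hexp _ (by linarith))) (dist_fst_le_of_walk hX w)
  rw [← hw]
  linarith

theorem fourPointCondition (hX : X.Connected) :
    FourPointCondition (fun p q => ((comboHoroball X).dist p q : ℝ))
      (4 * log 2 + 4 * log 3 + 6) := by
  convert FourPointCondition.of_near_approx_ultrametric (fun p => (p.2 : ℝ))
    apex_comm (apex_le_max_add_log_two hX) (two_mul_apex_le_dist hX)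
    (dist_le_two_mul_apex hX) using 1
  ring

end comboHoroball

/-- There is a universal constant `δ` such that every combinatorial horoball over a connected
simple graph is `δ`-hyperbolic in the four-point sense. -/
theorem stmt10 : ∃ δ : ℝ, 0 ≤ δ ∧
    ∀ (V : Type) (X : SimpleGraph V), X.Connected →
      ∀ w x y z : V × ℕ,
        ((comboHoroball X).dist w x : ℝ) + ((comboHoroball X).dist y z : ℝ) ≤
          max (((comboHoroball X).dist w y : ℝ) + ((comboHoroball X).dist x z : ℝ))
              (((comboHoroball X).dist w z : ℝ) + ((comboHoroball X).dist x y : ℝ)) + δ :=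
  ⟨_, by positivity, fun _ _ hX => comboHoroball.fourPointCondition hX⟩
end
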